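/- Let f₁(t) = Σ_{j=1}^n a_j e^{iλ_j t} and f₂(t) = Σ_{j=1}^n b_j e^{iλ_j t} be equivalent trigonometric polynomials with distinct real frequencies. Then for every ε > 0 there exists a relatively dense set of real numbers τ such that |f₁(t + τ) − f₂(t)| < ε for all t ∈ ℝ. -/

import Mathlib

/-!
Pick a `ℤ`-basis `μ` of the group generated by the frequencies, so that `λⱼ = ∑ₖ cⱼₖ μₖ` with
integers `cⱼₖ`, and `ψ(λⱼ) = ∑ₖ cⱼₖ θₖ` with `θₖ = ψ(μₖ)`. Then
`|f₁(t + τ) - f₂(t)| ≤ ∑ⱼ |aⱼ| ∑ₖ |cⱼₖ| |e^{i(μₖτ - θₖ)} - 1|`, so it suffices that all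
`e^{i(μₖτ - θₖ)}` be close to `1` simultaneously: this is Kronecker's theorem, proved as Bohr did.
The `N`-th power of `G(t) = ∏ₖ (1 + cos(μₖt - θₖ))/2` is a trigonometric polynomial whose only
zero frequency (by `ℤ`-independence of `μ`) has coefficient `(binom(2N, N)/4^N)^m`, while all other
terms have integrals bounded independently of the interval. Hence `G^N` exceeds half that
coefficient somewhere in every long interval, and for `N` large this forces every factor of `G`
to be close to `1`.
-/

noncomputable section

/-- Bohr's equivalence relation on finite trigonometric polynomials with
frequencies `lam`. -/
def FinEquiv {n : ℕ} (lam : Fin n → ℝ) (a b : Fin n → ℂ) : Prop :=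
  ∃ ψ : (Submodule.span ℚ (Set.range lam)) →ₗ[ℚ] ℝ,
    ∀ j, b j = a j *
      Complex.exp (Complex.I *
        (ψ ⟨lam j, Submodule.subset_span (Set.mem_range_self j)⟩ : ℝ))

open Complex Finset Set

def IsRelativelyDense (S : Set ℝ) : Prop :=
  ∃ l > 0, ∀ x : ℝ, ∃ τ ∈ Icc x (x + l), τ ∈ S

theorem IsRelativelyDense.mono {S S' : Set ℝ} (h : IsRelativelyDense S) (hS : S ⊆ S') :
    IsRelativelyDense S' :=
  let ⟨l, hl, hS'⟩ := h
  ⟨l, hl, fun x ↦ let ⟨τ, hτ, hτS⟩ := hS' x; ⟨τ, hτ, hS hτS⟩⟩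

theorem isRelativelyDense_half_le_of_integral {g : ℝ → ℝ} (hg : Continuous g) {c S : ℝ}
    (hc : 0 < c) (hS : ∀ x T, c * T - S ≤ ∫ t in x..x + T, g t) :
    IsRelativelyDense {τ | c / 2 ≤ g τ} := by
  have hS₀ : 0 ≤ S := by simpa using hS 0 0
  -- `T` is chosen so that the mean `(c * T - S) / T` of `g` over `[x, x + T]` is at least `c / 2`.
  set T := 2 * S / c + 1 with hT
  have hT₀ : 0 < T := by positivity
  refine ⟨T, hT₀, fun x ↦ ?_⟩
  have hxT : x ≤ x + T := by linarith
  obtain ⟨τ, hτ, hmax⟩ :=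
    isCompact_Icc.exists_isMaxOn (nonempty_Icc.2 hxT) hg.continuousOn
  refine ⟨τ, hτ, ?_⟩
  have hint : ∫ t in x..x + T, g t ≤ T * g τ := by
    simpa using intervalIntegral.integral_mono_on (μ := MeasureTheory.volume) hxT
      (hg.intervalIntegrable _ _) intervalIntegrable_const fun t ht ↦ hmax ht
  have hcT : c * T = 2 * S + c := by rw [hT]; field_simp
  show c / 2 ≤ g τ
  nlinarith [hS x T]

theorem norm_integral_exp_I_mul_le (ν w a b : ℝ) (hν : ν ≠ 0) :
    ‖∫ t in a..b, exp (I * (ν * t - w))‖ ≤ 2 / |ν| := by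
  have hrw : ∀ t : ℝ, exp (I * (ν * t - w)) = exp (-(I * w)) * exp (I * ν * t) := by
    intro t; rw [← exp_add]; ring_nf
  have hIν : I * ν ≠ 0 := mul_ne_zero I_ne_zero (ofReal_ne_zero.mpr hν)
  simp only [hrw, intervalIntegral.integral_const_mul, integral_exp_mul_complex hIν, norm_mul,
    norm_div]
  have hexp : ∀ y : ℝ, ‖exp (I * ν * y)‖ = 1 := fun y ↦ by
    rw [norm_exp]; simp
  rw [norm_exp]
  simp only [neg_re, mul_re, I_re, ofReal_re, I_im, ofReal_im, zero_mul, one_mul, sub_zero,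
    neg_zero, Real.exp_zero, norm_I, norm_real, Real.norm_eq_abs]
  gcongr
  calc _ ≤ _ := norm_sub_le _ _
    _ = 2 := by rw [hexp, hexp]; norm_num

theorem norm_integral_sum_exp_I_mul_le {α : Type*} (s : Finset α) (c : α → ℂ) {ν : α → ℝ}
    (hν : ∀ J ∈ s, ν J ≠ 0) (w : α → ℝ) (a b : ℝ) :
    ‖∫ t in a..b, ∑ J ∈ s, c J * exp (I * (ν J * t - w J))‖ ≤ ∑ J ∈ s, ‖c J‖ * (2 / |ν J|) := by
  rw [intervalIntegral.integral_finsetSum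
    fun J _ ↦ (by fun_prop : Continuous _).intervalIntegrable _ _]
  refine (norm_sum_le _ _).trans (sum_le_sum fun J hJ ↦ ?_)
  rw [intervalIntegral.integral_const_mul, norm_mul]
  exact mul_le_mul_of_nonneg_left (norm_integral_exp_I_mul_le _ _ _ _ (hν J hJ)) (norm_nonneg _)

theorem isRelativelyDense_half_le_of_eq_add_sum_exp {α : Type*} {g : ℝ → ℝ} (hg : Continuous g)
    {c₀ : ℝ} (hc₀ : 0 < c₀) (s : Finset α) (c : α → ℂ) {ν : α → ℝ} (hν : ∀ J ∈ s, ν J ≠ 0)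
    (w : α → ℝ) (hgs : ∀ t, (g t : ℂ) = c₀ + ∑ J ∈ s, c J * exp (I * (ν J * t - w J))) :
    IsRelativelyDense {τ | c₀ / 2 ≤ g τ} := by
  refine isRelativelyDense_half_le_of_integral hg hc₀ (S := ∑ J ∈ s, ‖c J‖ * (2 / |ν J|))
    fun x T ↦ ?_
  have hint : ((∫ t in x..x + T, g t : ℝ) : ℂ) - c₀ * T =
      ∫ t in x..x + T, ∑ J ∈ s, c J * exp (I * (ν J * t - w J)) := by
    rw [← intervalIntegral.integral_ofReal]
    simp only [hgs]
    rw [intervalIntegral.integral_add intervalIntegrable_const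
      ((by fun_prop : Continuous _).intervalIntegrable _ _)]
    simp only [intervalIntegral.integral_const, add_sub_cancel_left, real_smul]
    ring
  have := norm_integral_sum_exp_I_mul_le s c hν w x (x + T)
  rw [← hint, ← ofReal_mul, ← ofReal_sub, norm_real, Real.norm_eq_abs] at this
  linarith [(abs_le.1 this).1]

theorem half_one_add_cos_pow_eq_sum (N : ℕ) (x : ℝ) :
    ((((1 + Real.cos x) / 2) ^ N : ℝ) : ℂ) =
      ∑ j ∈ range (2 * N + 1), ((2 * N).choose j / 4 ^ N : ℝ) * exp (I * (((j : ℝ) - N) * x)) := by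
  have hsq : (exp (I * x) + 1) ^ 2 = exp (I * x) * (2 * (1 + Real.cos x)) := by
    rw [mul_comm I, exp_mul_I]
    push_cast
    linear_combination sin (x : ℂ) ^ 2 * I_sq - sin_sq_add_cos_sq (x : ℂ)
  set e := exp (I * x)
  have hshift : ∀ j : ℕ, exp (I * (((j : ℝ) - N) * x)) = exp (-(N * (I * x))) * e ^ j := by
    intro j
    rw [← exp_nat_mul, ← exp_add]
    push_cast
    ring_nf
  have hcancel : exp (-(N * (I * x))) * e ^ N = 1 := by
    rw [← exp_nat_mul, ← exp_add, neg_add_cancel, exp_zero]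
  calc ((((1 + Real.cos x) / 2) ^ N : ℝ) : ℂ)
      = exp (-(N * (I * x))) * e ^ N * (2 * (1 + Real.cos x)) ^ N / 4 ^ N := by
        rw [hcancel, one_mul]
        push_cast
        rw [div_pow, mul_pow, show (4 : ℂ) ^ N = 2 ^ N * 2 ^ N by rw [← mul_pow]; norm_num]
        field_simp
    _ = exp (-(N * (I * x))) * (e + 1) ^ (2 * N) / 4 ^ N := by
        rw [pow_mul, hsq, mul_pow e, mul_assoc (exp _)]
    _ = _ := by
        rw [add_pow, mul_sum, sum_div]
        refine sum_congr rfl fun j _ ↦ ?_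
        rw [hshift]
        push_cast
        ring

theorem prod_half_one_add_cos_pow_eq_sum {κ : Type*} [Fintype κ] [DecidableEq κ] (N : ℕ)
    (μ θ : κ → ℝ) (t : ℝ) :
    (((∏ k, (1 + Real.cos (μ k * t - θ k)) / 2) ^ N : ℝ) : ℂ) =
      ∑ J ∈ Fintype.piFinset fun _ ↦ range (2 * N + 1),
        (∏ k, ((2 * N).choose (J k) / 4 ^ N : ℝ)) *
          exp (I * ((∑ k, ((J k : ℝ) - N) * μ k) * t - ∑ k, ((J k : ℝ) - N) * θ k)) := by
  rw [← Finset.prod_pow, ofReal_prod, prod_congr rfl fun k _ ↦ half_one_add_cos_pow_eq_sum N _,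
    prod_univ_sum]
  refine sum_congr rfl fun J _ ↦ ?_
  rw [prod_mul_distrib, ← exp_sum, ofReal_prod]
  congr 2
  push_cast
  rw [sum_mul, ← sum_sub_distrib, mul_sum]
  exact sum_congr rfl fun k _ ↦ by ring

theorem prod_half_one_add_cos_pow_eq_add_sum {κ : Type*} [Fintype κ] [DecidableEq κ] (N : ℕ)
    (μ θ : κ → ℝ) (t : ℝ) :
    (((∏ k, (1 + Real.cos (μ k * t - θ k)) / 2) ^ N : ℝ) : ℂ) =
      (((N.centralBinom : ℝ) / 4 ^ N) ^ Fintype.card κ : ℝ) +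
      ∑ J ∈ (Fintype.piFinset fun _ ↦ range (2 * N + 1)).erase fun _ ↦ N,
        (∏ k, ((2 * N).choose (J k) / 4 ^ N : ℝ)) *
          exp (I * ((∑ k, ((J k : ℝ) - N) * μ k) * t - ∑ k, ((J k : ℝ) - N) * θ k)) := by
  have hN : (fun _ ↦ N) ∈ Fintype.piFinset fun _ : κ ↦ range (2 * N + 1) := by
    simp only [Fintype.mem_piFinset, Finset.mem_range]; omega
  rw [prod_half_one_add_cos_pow_eq_sum, ← add_sum_erase _ _ hN]
  simp [Nat.centralBinom_eq_two_mul_choose, div_pow]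

theorem exists_two_mul_pow_lt_centralBinom_div {s : ℝ} (hs₀ : 0 ≤ s) (hs₁ : s < 1) (m : ℕ) :
    ∃ N : ℕ, 2 * s ^ N < ((N.centralBinom : ℝ) / 4 ^ N) ^ m := by
  obtain ⟨N, hNs, hN₁⟩ := (((tendsto_pow_const_mul_const_pow_of_lt_one m hs₀ hs₁)
    |>.eventually_lt_const (show (0 : ℝ) < 1 / (2 * 2 ^ m) by positivity)).and
    (Filter.eventually_ge_atTop 1)).exists
  refine ⟨N, ?_⟩
  have hN : (0 : ℝ) < N := by exact_mod_cast hN₁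
  have hbinom : 1 / (2 * N) ≤ (N.centralBinom : ℝ) / 4 ^ N := by
    rw [div_le_div_iff₀ (by positivity) (by positivity), one_mul, mul_comm]
    exact_mod_cast Nat.four_pow_le_two_mul_self_mul_centralBinom N hN₁
  calc 2 * s ^ N = 2 * (N ^ m * s ^ N) / N ^ m := by field_simp
    _ < 2 * (1 / (2 * 2 ^ m)) / N ^ m := by gcongr
    _ = (1 / (2 * N)) ^ m := by rw [div_pow, one_pow, mul_pow]; field_simp
    _ ≤ _ := by gcongr

theorem isRelativelyDense_forall_lt_cos {κ : Type*} [Fintype κ] {μ : κ → ℝ}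
    (hμ : LinearIndependent ℤ μ) (θ : κ → ℝ) {r : ℝ} (hr : r < 1) :
    IsRelativelyDense {τ | ∀ k, r < Real.cos (μ k * τ - θ k)} := by
  classical
  set s := max ((1 + r) / 2) 0
  obtain ⟨N, hN⟩ := exists_two_mul_pow_lt_centralBinom_div (le_max_right _ _)
    (max_lt (by linarith) one_pos : s < 1) (Fintype.card κ)
  set c₀ : ℝ := ((N.centralBinom : ℝ) / 4 ^ N) ^ Fintype.card κ
  have hfactor₀ : ∀ x, 0 ≤ (1 + Real.cos x) / 2 := fun x ↦ by linarith [Real.neg_one_le_cos x]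
  have hfactor₁ : ∀ x, (1 + Real.cos x) / 2 ≤ 1 := fun x ↦ by linarith [Real.cos_le_one x]
  -- By `ℤ`-independence of `μ`, the multi-index `J = N` is the only zero frequency.
  have hdense : IsRelativelyDense
      {τ | c₀ / 2 ≤ (∏ k, (1 + Real.cos (μ k * τ - θ k)) / 2) ^ N} := by
    have hc₀ : 0 < c₀ := by have := N.centralBinom_pos; positivity
    refine isRelativelyDense_half_le_of_eq_add_sum_exp (by fun_prop) hc₀ _ _
      (fun J hJ hν ↦ (mem_erase.1 hJ).1 (funext fun k ↦ ?_)) _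
      (prod_half_one_add_cos_pow_eq_add_sum N μ θ)
    have := Fintype.linearIndependent_iff.1 hμ (fun k ↦ (J k : ℤ) - N) (by simpa using hν) k
    omega
  refine hdense.mono fun τ hτ k ↦ ?_
  by_contra! hcos
  have hG : ∏ k, (1 + Real.cos (μ k * τ - θ k)) / 2 ≤ s := by
    rw [← mul_prod_erase _ _ (mem_univ k)]
    refine (mul_le_of_le_one_right (hfactor₀ _) ?_).trans (le_max_of_le_left (by linarith))
    exact prod_le_one (fun _ _ ↦ hfactor₀ _) fun _ _ ↦ hfactor₁ _
  have : c₀ / 2 ≤ s ^ N :=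
    le_trans hτ (pow_le_pow_left₀ (prod_nonneg fun _ _ ↦ hfactor₀ _) hG N)
  linarith

theorem norm_exp_I_mul_ofReal_sub_one_sq (x : ℝ) :
    ‖exp (I * x) - 1‖ ^ 2 = 2 - 2 * Real.cos x := by
  rw [mul_comm, exp_mul_I, ← ofReal_cos, ← ofReal_sin, Complex.sq_norm, normSq_apply]
  simp only [sub_re, add_re, ofReal_re, mul_re, I_re, I_im, ofReal_im, one_re, sub_im, add_im,
    mul_im, one_im]
  nlinarith [Real.sin_sq_add_cos_sq x]

theorem isRelativelyDense_forall_norm_exp_sub_one_lt {κ : Type*} [Fintype κ] {μ : κ → ℝ}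
    (hμ : LinearIndependent ℤ μ) (θ : κ → ℝ) {δ : ℝ} (hδ : 0 < δ) :
    IsRelativelyDense {τ | ∀ k, ‖exp (I * ↑(μ k * τ - θ k)) - 1‖ < δ} := by
  have hr : 1 - δ ^ 2 / 2 < 1 := by linarith [sq_pos_of_pos hδ]
  refine (isRelativelyDense_forall_lt_cos hμ θ hr).mono fun τ hτ k ↦ ?_
  have := norm_exp_I_mul_ofReal_sub_one_sq (μ k * τ - θ k)
  exact lt_of_pow_lt_pow_left₀ 2 hδ.le (by linarith [hτ k])

section UnitNorm

variable {𝕜 : Type*} [NormedField 𝕜]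

theorem norm_mul_sub_one_le {z w : 𝕜} (hz : ‖z‖ = 1) :
    ‖z * w - 1‖ ≤ ‖z - 1‖ + ‖w - 1‖ := by
  calc ‖z * w - 1‖ = ‖z * (w - 1) + (z - 1)‖ := by ring_nf
    _ ≤ ‖z - 1‖ + ‖w - 1‖ := by
      rw [add_comm ‖z - 1‖]
      simpa [hz] using norm_add_le (z * (w - 1)) (z - 1)

theorem norm_pow_sub_one_le {z : 𝕜} (hz : ‖z‖ = 1) (n : ℕ) :
    ‖z ^ n - 1‖ ≤ n * ‖z - 1‖ := by
  induction n with
  | zero => simp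
  | succ n ih =>
    calc ‖z ^ (n + 1) - 1‖ ≤ ‖z - 1‖ + ‖z ^ n - 1‖ := by
          rw [pow_succ']; exact norm_mul_sub_one_le hz
      _ ≤ (n + 1 : ℕ) * ‖z - 1‖ := by push_cast; linarith

theorem norm_zpow_sub_one_le {z : 𝕜} (hz : ‖z‖ = 1) (n : ℤ) :
    ‖z ^ n - 1‖ ≤ |(n : ℝ)| * ‖z - 1‖ := by
  have hz₀ : z ≠ 0 := norm_ne_zero_iff.mp (by simp [hz])
  obtain ⟨k, rfl | rfl⟩ := Int.eq_nat_or_neg n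
  · simpa using norm_pow_sub_one_le hz k
  · have : z ^ (-(k : ℤ)) - 1 = z ^ (-(k : ℤ)) * (1 - z ^ k) := by
      rw [mul_one_sub, zpow_neg, zpow_natCast, inv_mul_cancel₀ (pow_ne_zero _ hz₀)]
    rw [this, norm_mul, norm_zpow, hz, one_zpow, one_mul, norm_sub_rev]
    simpa using norm_pow_sub_one_le hz k

theorem norm_prod_zpow_sub_one_le {ι : Type*} (s : Finset ι) {z : ι → 𝕜}
    (hz : ∀ i, ‖z i‖ = 1) (n : ι → ℤ) :
    ‖∏ i ∈ s, z i ^ n i - 1‖ ≤ ∑ i ∈ s, |(n i : ℝ)| * ‖z i - 1‖ := by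
  classical
  induction s using Finset.induction_on with
  | empty => simp
  | insert i s hi ih =>
    rw [prod_insert hi, sum_insert hi]
    have hzi : ‖z i ^ n i‖ = 1 := by rw [norm_zpow, hz, one_zpow]
    calc _ ≤ ‖z i ^ n i - 1‖ + ‖∏ i ∈ s, z i ^ n i - 1‖ := norm_mul_sub_one_le hzi
      _ ≤ _ := by gcongr; exact norm_zpow_sub_one_le (hz i) (n i)

end UnitNorm

theorem exp_I_mul_sum_int_mul {κ : Type*} (s : Finset κ) (c : κ → ℤ) (x : κ → ℝ) :
    exp (I * ↑(∑ k ∈ s, c k * x k)) = ∏ k ∈ s, exp (I * x k) ^ c k := by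
  push_cast
  rw [mul_sum, exp_sum]
  exact prod_congr rfl fun k _ ↦ by rw [← exp_int_mul]; ring_nf

theorem norm_exp_I_mul_sum_int_mul_sub_one_le {κ : Type*} (s : Finset κ) (c : κ → ℤ)
    (x : κ → ℝ) :
    ‖exp (I * ↑(∑ k ∈ s, c k * x k)) - 1‖ ≤ ∑ k ∈ s, |(c k : ℝ)| * ‖exp (I * x k) - 1‖ := by
  rw [exp_I_mul_sum_int_mul]
  exact norm_prod_zpow_sub_one_le s (fun k ↦ norm_exp_I_mul_ofReal (x k)) c

theorem norm_sum_exp_translate_sub_le {ι : Type*} [Fintype ι] (lam φ : ι → ℝ) (a b : ι → ℂ)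
    (hb : ∀ j, b j = a j * exp (I * φ j)) (t τ : ℝ) :
    ‖∑ j, a j * exp (I * lam j * ↑(t + τ)) - ∑ j, b j * exp (I * lam j * t)‖ ≤
      ∑ j, ‖a j‖ * ‖exp (I * ↑(lam j * τ - φ j)) - 1‖ := by
  rw [← sum_sub_distrib]
  refine (norm_sum_le _ _).trans (sum_le_sum fun j _ ↦ ?_)
  have hsplit : exp (I * lam j * ↑(t + τ)) =
      exp (I * ↑(lam j * t + φ j)) * exp (I * ↑(lam j * τ - φ j)) := by
    rw [← exp_add]; push_cast; ring_nf
  have hphase : exp (I * φ j) * exp (I * lam j * t) = exp (I * ↑(lam j * t + φ j)) := by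
    rw [← exp_add]; push_cast; ring_nf
  rw [hb, hsplit, mul_assoc, hphase, ← mul_assoc, ← mul_sub_one, norm_mul, norm_mul,
    norm_exp_I_mul_ofReal, mul_one]

theorem norm_sum_exp_translate_sub_le_sum_int {ι κ : Type*} [Fintype ι] [Fintype κ]
    {lam φ : ι → ℝ} {μ θ : κ → ℝ} (c : ι → κ → ℤ) (hlam : ∀ j, lam j = ∑ k, c j k * μ k)
    (hφ : ∀ j, φ j = ∑ k, c j k * θ k) {a b : ι → ℂ} (hb : ∀ j, b j = a j * exp (I * φ j))
    (t τ : ℝ) :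
    ‖∑ j, a j * exp (I * lam j * ↑(t + τ)) - ∑ j, b j * exp (I * lam j * t)‖ ≤
      ∑ j, ‖a j‖ * ∑ k, |(c j k : ℝ)| * ‖exp (I * ↑(μ k * τ - θ k)) - 1‖ := by
  refine (norm_sum_exp_translate_sub_le lam φ a b hb t τ).trans (sum_le_sum fun j _ ↦ ?_)
  have hphase : lam j * τ - φ j = ∑ k, c j k * (μ k * τ - θ k) := by
    rw [hφ, hlam, sum_mul, ← sum_sub_distrib]
    exact sum_congr rfl fun k _ ↦ by ring
  rw [hphase]
  gcongr
  exact norm_exp_I_mul_sum_int_mul_sub_one_le _ _ _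

theorem exists_int_basis_of_span {ι : Type*} [Finite ι] (lam : ι → ℝ) :
    ∃ (m : ℕ) (μ : Fin m → ℝ) (c : ι → Fin m → ℤ), LinearIndependent ℤ μ ∧
      (∀ k, μ k ∈ Submodule.span ℤ (range lam)) ∧ ∀ j, lam j = ∑ k, c j k * μ k := by
  set Λ := Submodule.span ℤ (range lam)
  have : Module.Finite ℤ Λ := Module.Finite.span_of_finite ℤ (finite_range lam)
  let B := (Module.Free.chooseBasis ℤ Λ).reindex (Fintype.equivFin _)
  refine ⟨_, fun k ↦ B k, fun j k ↦ B.repr ⟨lam j, Submodule.subset_span (mem_range_self j)⟩ k,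
    B.linearIndependent.map' Λ.subtype Λ.ker_subtype, fun k ↦ (B k).2, fun j ↦ ?_⟩
  have := congrArg Subtype.val (B.sum_repr ⟨lam j, Submodule.subset_span (mem_range_self j)⟩)
  rw [AddSubmonoidClass.coe_finsetSum] at this
  simpa only [SetLike.val_smul, zsmul_eq_mul] using this.symm

theorem finEquiv_translation_numbers_real_general {n : ℕ} (lam : Fin n → ℝ)
    (a b : Fin n → ℂ)
    (heq : FinEquiv lam a b) (ε : ℝ) (hε : 0 < ε) :
    ∃ l > (0 : ℝ), ∀ x : ℝ, ∃ τ ∈ Set.Icc x (x + l),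
      ∀ t : ℝ,
        ‖(∑ j, a j * Complex.exp (Complex.I * (lam j : ℂ) * ((t + τ : ℝ) : ℂ))) -
          ∑ j, b j * Complex.exp (Complex.I * (lam j : ℂ) * (t : ℂ))‖ < ε := by
  obtain ⟨ψ, hψ⟩ := heq
  obtain ⟨m, μ, c, hμ, hμΛ, hlam⟩ := exists_int_basis_of_span lam
  have hμℚ : ∀ k, μ k ∈ Submodule.span ℚ (range lam) :=
    fun k ↦ Submodule.span_subset_span ℤ ℚ _ (hμΛ k)
  set θ : Fin m → ℝ := fun k ↦ ψ ⟨μ k, hμℚ k⟩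
  set φ : Fin n → ℝ := fun j ↦ ψ ⟨lam j, Submodule.subset_span (mem_range_self j)⟩
  have hφ : ∀ j, φ j = ∑ k, c j k * θ k := fun j ↦ by
    have : (⟨lam j, Submodule.subset_span (mem_range_self j)⟩ : Submodule.span ℚ (range lam)) =
        ∑ k, c j k • ⟨μ k, hμℚ k⟩ := by
      ext; simp [hlam j, zsmul_eq_mul]
    simp only [φ, this, map_sum, map_zsmul, zsmul_eq_mul, θ]
  set K := ∑ j, ‖a j‖ * ∑ k, |(c j k : ℝ)|
  have hK : 0 ≤ K := by positivity
  have hδ : 0 < ε / (K + 1) := by positivity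
  refine (isRelativelyDense_forall_norm_exp_sub_one_lt hμ θ hδ).mono fun τ hτ t ↦ ?_
  calc _ ≤ _ := norm_sum_exp_translate_sub_le_sum_int c hlam hφ hψ t τ
    _ ≤ ∑ j, ‖a j‖ * ∑ k, |(c j k : ℝ)| * (ε / (K + 1)) := by
        gcongr with j _ k
        exact (hτ k).le
    _ = K * (ε / (K + 1)) := by simp only [K, sum_mul, mul_sum, mul_assoc]
    _ < ε := by rw [mul_div_assoc', div_lt_iff₀ (by positivity)]; nlinarith

/-- If `f₁(t) = ∑ aⱼ e^{iλⱼ t}` and `f₂(t) = ∑ bⱼ e^{iλⱼ t}` are equivalent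
trigonometric polynomials, then for every `ε > 0` there is a relatively dense set
of real `τ` with `|f₁(t+τ) − f₂(t)| < ε` for all `t ∈ ℝ`. -/
theorem finEquiv_translation_numbers_real {n : ℕ} (lam : Fin n → ℝ)
    (hinj : Function.Injective lam) (a b : Fin n → ℂ)
    (heq : FinEquiv lam a b) (ε : ℝ) (hε : 0 < ε) :
    ∃ l > (0 : ℝ), ∀ x : ℝ, ∃ τ ∈ Set.Icc x (x + l),
      ∀ t : ℝ,
        ‖(∑ j, a j * Complex.exp (Complex.I * (lam j : ℂ) * ((t + τ : ℝ) : ℂ))) -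
          ∑ j, b j * Complex.exp (Complex.I * (lam j : ℂ) * (t : ℂ))‖ < ε :=
  finEquiv_translation_numbers_real_general lam a b heq ε hε
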